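/- For all n ≥ k ≥ 1, LS_{n,k}(1/23, r) = RB_{n,k}(12/3, r) as polynomials, where both equal k·r^{C(k,2)} when n > k and r^{C(k,2)} when n = k. -/

import Mathlib

/-!
Let `M` be the set of block minima of a partition with `k` blocks. In its restricted growth
function, the letters left of a block minimum `j` and smaller than the letter at `j` are exactly
the letters at the minima left of `j`; symmetrically for bigger letters right of `j`. So the
positions in `M` contribute `#{(i, j) ∈ M × M | i < j} = C(k, 2)` to both `ls` and `rb`.
Avoiding `1/23` forces every non-minimal element into the block of the least element, whose
letter `1` has no smaller letter; avoiding `12/3` forces everything right of a non-minimal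
element into its block. Hence both polynomials are (number of avoiders) · `r^C(k,2)`.
Reversal `i ↦ n + 1 - i` exchanges `1/23`- and `12/3`-avoiders, and a `1/23`-avoider with `k`
blocks has the blocks `{1, …, n - k} ∪ {t}` with `n - k < t ≤ n` and singletons: that is `k`
partitions if `k < n`, and only the discrete one if `k = n`.
-/

open Finset Polynomial

/-- Set partitions of `[n] = {1, …, n}`, modeled as finpartitions of `Fin n`. -/
abbrev SP (n : ℕ) := Finpartition (Finset.univ : Finset (Fin n))

noncomputable instance (n : ℕ) : Fintype (SP n) :=
  Fintype.ofInjective Finpartition.parts fun _ _ h => Finpartition.ext h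

/-- `i` and `j` lie in the same block of the set partition `P`. -/
def inSameBlock {n : ℕ} (P : SP n) (i j : Fin n) : Prop :=
  ∃ B ∈ P.parts, i ∈ B ∧ j ∈ B

/-- `P` avoids the pattern `1/2/3`: no three elements lie in three pairwise distinct blocks. -/
def avoids1_2_3 {n : ℕ} (P : SP n) : Prop :=
  ¬ ∃ a b c : Fin n, a < b ∧ b < c ∧
    ¬ inSameBlock P a b ∧ ¬ inSameBlock P b c ∧ ¬ inSameBlock P a c

/-- `P` avoids the pattern `13/2`. -/
def avoids13_2 {n : ℕ} (P : SP n) : Prop :=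
  ¬ ∃ a b c : Fin n, a < b ∧ b < c ∧ inSameBlock P a c ∧ ¬ inSameBlock P a b

/-- `P` avoids the pattern `1/23`. -/
def avoids1_23 {n : ℕ} (P : SP n) : Prop :=
  ¬ ∃ a b c : Fin n, a < b ∧ b < c ∧ inSameBlock P b c ∧ ¬ inSameBlock P a b

/-- `P` avoids the pattern `12/3`. -/
def avoids12_3 {n : ℕ} (P : SP n) : Prop :=
  ¬ ∃ a b c : Fin n, a < b ∧ b < c ∧ inSameBlock P a b ∧ ¬ inSameBlock P a c

/-- `P` avoids the pattern `123`: every block has at most two elements. -/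
def avoids123 {n : ℕ} (P : SP n) : Prop :=
  ∀ B ∈ P.parts, B.card ≤ 2

/-- The block of `P` containing `i`. -/
def blockOf {n : ℕ} (P : SP n) (i : Fin n) : Finset (Fin n) :=
  (P.parts.filter (fun B => i ∈ B)).sup id

/-- The restricted growth function of `P`: the letter at position `i` is the index
(starting from 1) of the block containing `i`, blocks being ordered by increasing minima. -/
def rgf {n : ℕ} (P : SP n) (i : Fin n) : ℕ :=
  (P.parts.filter (fun B => B.min ≤ (blockOf P i).min)).card

/-- The left-bigger statistic of Wachs and White. -/
def lbStat {n : ℕ} (w : Fin n → ℕ) : ℕ :=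
  ∑ j : Fin n, (((Finset.univ.filter (fun i => i < j)).image w).filter (fun v => w j < v)).card

/-- The left-smaller statistic of Wachs and White. -/
def lsStat {n : ℕ} (w : Fin n → ℕ) : ℕ :=
  ∑ j : Fin n, (((Finset.univ.filter (fun i => i < j)).image w).filter (fun v => v < w j)).card

/-- The right-bigger statistic of Wachs and White. -/
def rbStat {n : ℕ} (w : Fin n → ℕ) : ℕ :=
  ∑ j : Fin n, (((Finset.univ.filter (fun i => j < i)).image w).filter (fun v => w j < v)).card

/-- The right-smaller statistic of Wachs and White. -/
def rsStat {n : ℕ} (w : Fin n → ℕ) : ℕ :=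
  ∑ j : Fin n, (((Finset.univ.filter (fun i => j < i)).image w).filter (fun v => v < w j)).card

open Classical in
/-- The generating function `∑ q^{stat(π)}` over `k`-block partitions of `[n]` avoiding
a given family of patterns (described by the avoidance predicate `avoid`). -/
noncomputable def genPoly (n k : ℕ) (avoid : SP n → Prop) (stat : (Fin n → ℕ) → ℕ) :
    Polynomial ℕ :=
  ∑ P ∈ Finset.univ.filter (fun P : SP n => P.parts.card = k ∧ avoid P),
    Polynomial.X ^ (stat (rgf P))

instance Setoid.decidableRelKer {α β : Type*} [h : DecidableEq β] (f : α → β) :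
    DecidableRel (Setoid.ker f) :=
  fun a b => h (f a) (f b)

namespace Finpartition

variable {α : Type*} [DecidableEq α]

lemma parts_eq_image_part {s : Finset α} (P : Finpartition s) : P.parts = s.image P.part := by
  ext t
  refine ⟨fun ht => ?_, fun ht => ?_⟩
  · obtain ⟨a, ha, rfl⟩ := P.part_surjOn ht
    exact mem_image_of_mem _ ha
  · obtain ⟨a, ha, rfl⟩ := mem_image.1 ht
    exact P.part_mem.2 ha

lemma ext_part {s : Finset α} {P Q : Finpartition s} (h : ∀ a ∈ s, P.part a = Q.part a) :
    P = Q :=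
  Finpartition.ext <| by rw [parts_eq_image_part, parts_eq_image_part, image_congr h]

variable [Fintype α]

lemma part_ofSetoid_ker {β : Type*} [DecidableEq β] (f : α → β) :
    (ofSetoid (Setoid.ker f)).part = (fun b => ({a | f a = b} : Finset α)) ∘ f := by
  ext a x
  simp [mem_part_ofSetoid_iff_rel, Setoid.ker_def, eq_comm]

lemma card_parts_ofSetoid_ker {β : Type*} [DecidableEq β] (f : α → β) :
    #(ofSetoid (Setoid.ker f)).parts = #(univ.image f) := by
  rw [parts_eq_image_part, part_ofSetoid_ker, ← image_image]
  refine card_image_of_injOn fun b hb b' _ hbb' => ?_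
  obtain ⟨a, -, rfl⟩ := mem_image.1 hb
  have : a ∈ ({x | f x = b'} : Finset α) := by simp [← hbb']
  simpa using this

lemma part_ofSetoid_ker_eq_iff {β : Type*} [DecidableEq β] {f : α → β} {a b : α} :
    (ofSetoid (Setoid.ker f)).part a = (ofSetoid (Setoid.ker f)).part b ↔ f a = f b := by
  rw [← mem_part_iff_part_eq_part _ (mem_univ a) (mem_univ b), mem_part_ofSetoid_iff_rel,
    Setoid.ker_def, eq_comm]

end Finpartition

section LinearOrder

variable {γ : Type*} [LinearOrder γ]

lemma Finset.sum_card_filter_lt (S : Finset γ) :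
    ∑ j ∈ S, #{i ∈ S | i < j} = (#S).choose 2 := by
  induction S using Finset.induction_on_max with
  | empty => simp
  | insert a S haS ih =>
    have ha : a ∉ S := fun h => lt_irrefl a (haS a h)
    have hS : ∀ j ∈ S, #{i ∈ insert a S | i < j} = #{i ∈ S | i < j} := fun j hj => by
      rw [filter_insert, if_neg (not_lt.2 (haS j hj).le)]
    rw [sum_insert ha, Finset.sum_congr rfl hS, ih, filter_insert, if_neg (lt_irrefl a),
      filter_true_of_mem haS, card_insert_of_notMem ha, Nat.choose_succ_succ',
      Nat.choose_one_right, add_comm]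

lemma Finset.sum_card_filter_gt (S : Finset γ) :
    ∑ j ∈ S, #{i ∈ S | j < i} = (#S).choose 2 := by
  simp only [card_filter]
  rw [sum_comm, ← Finset.sum_card_filter_lt S]
  simp only [card_filter]

lemma Finset.card_filter_le_lt_card_filter_le_iff {β : Type*} {S : Finset β} {g : β → γ}
    {x y : γ} (hy : ∃ b ∈ S, g b = y) :
    #{b ∈ S | g b ≤ x} < #{b ∈ S | g b ≤ y} ↔ x < y := by
  refine ⟨fun h => not_le.1 fun hyx => h.not_ge (card_le_card ?_), fun hxy => ?_⟩
  · exact monotone_filter_right _ fun _ _ hb => hb.trans hyx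
  · obtain ⟨b, hb, rfl⟩ := hy
    refine card_lt_card ⟨monotone_filter_right _ fun _ _ h => h.trans hxy.le, fun hsub => ?_⟩
    exact (mem_filter.1 (hsub (mem_filter.2 ⟨hb, le_rfl⟩))).2.not_gt hxy

end LinearOrder

section SetPartitions

variable {n : ℕ}

lemma SP.mem_part_iff {P : SP n} {i j : Fin n} : i ∈ P.part j ↔ P.part i = P.part j :=
  P.mem_part_iff_part_eq_part (mem_univ _) (mem_univ _)

lemma inSameBlock_iff_part_eq {P : SP n} {i j : Fin n} :
    inSameBlock P i j ↔ P.part i = P.part j := by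
  rw [inSameBlock, ← P.mem_part_iff_exists, SP.mem_part_iff]

lemma SP.ext_of_part_eq_iff {P Q : SP n}
    (h : ∀ i j, P.part i = P.part j ↔ Q.part i = Q.part j) : P = Q :=
  Finpartition.ext_part fun i _ => by
    ext j
    rw [SP.mem_part_iff, SP.mem_part_iff, h]

lemma avoids1_23.part_eq {P : SP n} (h : avoids1_23 P) {a b c : Fin n} (hab : a < b)
    (hbc : b < c) (hb : P.part b = P.part c) : P.part a = P.part b := by
  by_contra hne
  exact h ⟨a, b, c, hab, hbc, inSameBlock_iff_part_eq.2 hb, mt inSameBlock_iff_part_eq.1 hne⟩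

lemma avoids12_3.part_eq {P : SP n} (h : avoids12_3 P) {a b c : Fin n} (hab : a < b)
    (hbc : b < c) (ha : P.part a = P.part b) : P.part a = P.part c := by
  by_contra hne
  exact h ⟨a, b, c, hab, hbc, inSameBlock_iff_part_eq.2 ha, mt inSameBlock_iff_part_eq.1 hne⟩

def blockMin (P : SP n) (j : Fin n) : Fin n :=
  (P.part j).min' (P.part_nonempty.2 (mem_univ j))

lemma blockMin_mem (P : SP n) (j : Fin n) : blockMin P j ∈ P.part j := min'_mem _ _

lemma part_blockMin (P : SP n) (j : Fin n) : P.part (blockMin P j) = P.part j :=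
  P.part_eq_of_mem (P.part_mem.2 (mem_univ j)) (blockMin_mem P j)

lemma blockMin_le_of_part_eq {P : SP n} {i j : Fin n} (h : P.part i = P.part j) :
    blockMin P j ≤ i :=
  min'_le _ _ (h ▸ P.mem_part (mem_univ i))

lemma blockMin_le (P : SP n) (j : Fin n) : blockMin P j ≤ j := blockMin_le_of_part_eq rfl

lemma blockOf_eq_part (P : SP n) (i : Fin n) : blockOf P i = P.part i := by
  have h : P.parts.filter (fun B => i ∈ B) = {P.part i} := by
    ext B
    simp only [mem_filter, mem_singleton]
    refine ⟨fun ⟨hB, hiB⟩ => (P.part_eq_of_mem hB hiB).symm, ?_⟩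
    rintro rfl
    exact ⟨P.part_mem.2 (mem_univ i), P.mem_part (mem_univ i)⟩
  rw [blockOf, h, sup_singleton, id]

lemma rgf_eq_of_part_eq {P : SP n} {i j : Fin n} (h : P.part i = P.part j) :
    rgf P i = rgf P j := by
  rw [rgf, rgf, blockOf_eq_part, blockOf_eq_part, h]

lemma rgf_lt_rgf_iff {P : SP n} {i j : Fin n} :
    rgf P i < rgf P j ↔ blockMin P i < blockMin P j := by
  rw [rgf, rgf, blockOf_eq_part, blockOf_eq_part,
    card_filter_le_lt_card_filter_le_iff ⟨P.part j, P.part_mem.2 (mem_univ j), rfl⟩,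
    ← coe_min' (P.part_nonempty.2 (mem_univ i)), ← coe_min' (P.part_nonempty.2 (mem_univ j)),
    WithTop.coe_lt_coe, blockMin, blockMin]

def blockMins (P : SP n) : Finset (Fin n) := {j | blockMin P j = j}

lemma mem_blockMins {P : SP n} {j : Fin n} : j ∈ blockMins P ↔ blockMin P j = j := by
  simp [blockMins]

lemma blockMin_mem_blockMins (P : SP n) (j : Fin n) : blockMin P j ∈ blockMins P :=
  mem_blockMins.2 <| le_antisymm (blockMin_le _ _)
    (blockMin_le_of_part_eq (by rw [part_blockMin, part_blockMin]))

lemma eq_of_part_eq_of_mem_blockMins {P : SP n} {i j : Fin n} (hi : i ∈ blockMins P)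
    (hj : j ∈ blockMins P) (h : P.part i = P.part j) : i = j := by
  rw [mem_blockMins] at hi hj
  exact le_antisymm (hi ▸ blockMin_le_of_part_eq h.symm) (hj ▸ blockMin_le_of_part_eq h)

lemma card_blockMins (P : SP n) : #(blockMins P) = #P.parts := by
  have himage : univ.image P.part = (blockMins P).image P.part := by
    refine (image_subset_image (subset_univ _)).antisymm' fun B hB => ?_
    obtain ⟨j, -, rfl⟩ := mem_image.1 hB
    exact mem_image.2 ⟨blockMin P j, blockMin_mem_blockMins P j, part_blockMin P j⟩
  rw [P.parts_eq_image_part, himage,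
    card_image_of_injOn fun i hi j hj => eq_of_part_eq_of_mem_blockMins hi hj]

lemma rgf_injOn_blockMins (P : SP n) : Set.InjOn (rgf P) (blockMins P) := by
  intro i hi j hj h
  rw [mem_coe, mem_blockMins] at hi hj
  by_contra hne
  rcases lt_or_gt_of_ne hne with hlt | hlt
  · exact (rgf_lt_rgf_iff.2 (by rwa [hi, hj])).ne h
  · exact (rgf_lt_rgf_iff.2 (by rwa [hi, hj])).ne' h

lemma filter_lt_image_rgf_of_mem_blockMins {P : SP n} {j : Fin n} (hj : j ∈ blockMins P) :
    ((univ.filter (· < j)).image (rgf P)).filter (· < rgf P j) =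
      ((blockMins P).filter (· < j)).image (rgf P) := by
  ext v
  simp only [mem_filter, mem_image, mem_univ, true_and]
  constructor
  · rintro ⟨⟨i, -, rfl⟩, hlt⟩
    rw [rgf_lt_rgf_iff, mem_blockMins.1 hj] at hlt
    exact ⟨blockMin P i, ⟨blockMin_mem_blockMins P i, hlt⟩,
      rgf_eq_of_part_eq (part_blockMin P i)⟩
  · rintro ⟨m, ⟨hm, hmj⟩, rfl⟩
    refine ⟨⟨m, hmj, rfl⟩, ?_⟩
    rwa [rgf_lt_rgf_iff, mem_blockMins.1 hm, mem_blockMins.1 hj]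

lemma filter_gt_image_rgf_of_mem_blockMins {P : SP n} {j : Fin n} (hj : j ∈ blockMins P) :
    ((univ.filter (j < ·)).image (rgf P)).filter (rgf P j < ·) =
      ((blockMins P).filter (j < ·)).image (rgf P) := by
  ext v
  simp only [mem_filter, mem_image, mem_univ, true_and]
  constructor
  · rintro ⟨⟨i, -, rfl⟩, hlt⟩
    rw [rgf_lt_rgf_iff, mem_blockMins.1 hj] at hlt
    exact ⟨blockMin P i, ⟨blockMin_mem_blockMins P i, hlt⟩,
      rgf_eq_of_part_eq (part_blockMin P i)⟩
  · rintro ⟨m, ⟨hm, hjm⟩, rfl⟩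
    refine ⟨⟨m, hjm, rfl⟩, ?_⟩
    rwa [rgf_lt_rgf_iff, mem_blockMins.1 hm, mem_blockMins.1 hj]

lemma avoids1_23.blockMin_le {P : SP n} (h : avoids1_23 P) {j : Fin n} (hj : blockMin P j ≠ j)
    (i : Fin n) : blockMin P j ≤ i := by
  by_contra! hi
  have hpart := h.part_eq hi (lt_of_le_of_ne (_root_.blockMin_le P j) hj) (part_blockMin P j)
  exact hi.not_ge (blockMin_le_of_part_eq (hpart.trans (part_blockMin P j)))

lemma avoids12_3.part_eq_of_lt {P : SP n} (h : avoids12_3 P) {i j : Fin n}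
    (hj : blockMin P j ≠ j) (hji : j < i) : P.part i = P.part j := by
  rw [← h.part_eq (lt_of_le_of_ne (blockMin_le P j) hj) hji (part_blockMin P j),
    part_blockMin]

theorem lsStat_rgf_of_avoids1_23 {P : SP n} (h : avoids1_23 P) :
    lsStat (rgf P) = (#P.parts).choose 2 := by
  rw [lsStat, ← sum_sdiff (subset_univ (blockMins P)), sum_eq_zero, zero_add, ← card_blockMins,
    ← sum_card_filter_lt]
  · refine Finset.sum_congr rfl fun j hj => ?_
    rw [filter_lt_image_rgf_of_mem_blockMins hj,
      card_image_of_injOn ((rgf_injOn_blockMins P).mono (filter_subset _ _))]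
  · intro j hj
    rw [mem_sdiff, mem_blockMins] at hj
    rw [card_eq_zero, filter_eq_empty_iff]
    intro v hv
    obtain ⟨i, -, rfl⟩ := mem_image.1 hv
    rw [rgf_lt_rgf_iff, not_lt]
    exact h.blockMin_le hj.2 _

theorem rbStat_rgf_of_avoids12_3 {P : SP n} (h : avoids12_3 P) :
    rbStat (rgf P) = (#P.parts).choose 2 := by
  rw [rbStat, ← sum_sdiff (subset_univ (blockMins P)), sum_eq_zero, zero_add, ← card_blockMins,
    ← sum_card_filter_gt]
  · refine Finset.sum_congr rfl fun j hj => ?_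
    rw [filter_gt_image_rgf_of_mem_blockMins hj,
      card_image_of_injOn ((rgf_injOn_blockMins P).mono (filter_subset _ _))]
  · intro j hj
    rw [mem_sdiff, mem_blockMins] at hj
    rw [card_eq_zero, filter_eq_empty_iff]
    intro v hv
    obtain ⟨i, hi, rfl⟩ := mem_image.1 hv
    rw [rgf_eq_of_part_eq (h.part_eq_of_lt hj.2 (mem_filter.1 hi).2)]
    exact lt_irrefl _

def SP.ofBlock (B : Finset (Fin n)) : SP n :=
  Finpartition.ofSetoid (Setoid.ker fun i => if i ∈ B then none else some i)

lemma SP.part_ofBlock_eq_iff {B : Finset (Fin n)} {i j : Fin n} :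
    (SP.ofBlock B).part i = (SP.ofBlock B).part j ↔ i = j ∨ (i ∈ B ∧ j ∈ B) := by
  rw [SP.ofBlock, Finpartition.part_ofSetoid_ker_eq_iff]
  split_ifs <;> grind

lemma SP.card_parts_ofBlock {B : Finset (Fin n)} (hB : B.Nonempty) :
    #(SP.ofBlock B).parts = #Bᶜ + 1 := by
  have himage : univ.image (fun i => if i ∈ B then none else some i) =
      insert none (Bᶜ.image some) := by
    ext (_ | j)
    · simpa [eq_comm, Finset.Nonempty] using hB
    · simp
  rw [SP.ofBlock, Finpartition.card_parts_ofSetoid_ker, himage, card_insert_of_notMem (by simp),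
    card_image_of_injective _ (Option.some_injective _)]

lemma SP.avoids1_23_ofBlock_insert_Iio (a t : Fin n) :
    avoids1_23 (SP.ofBlock (insert t (Iio a))) := by
  rintro ⟨x, y, z, hxy, hyz, hsame, hdiff⟩
  simp only [inSameBlock_iff_part_eq, SP.part_ofBlock_eq_iff, mem_insert, mem_Iio] at hsame hdiff
  grind

lemma SP.card_parts_ofBlock_insert_Iio {a t : Fin n} (hat : a ≤ t) :
    #(SP.ofBlock (insert t (Iio a))).parts = n - a := by
  rw [SP.card_parts_ofBlock ⟨t, mem_insert_self _ _⟩, card_compl,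
    card_insert_of_notMem (by simpa using hat), Fin.card_Iio, Fintype.card_fin]
  have := a.isLt
  omega

lemma avoids1_23.exists_part_eq_insert_Iio {P : SP n} (h : avoids1_23 P) (j : Fin n) :
    ∃ a t : Fin n, a ≤ t ∧ P.part j = insert t (Iio a) := by
  have hne : (P.part j).Nonempty := P.part_nonempty.2 (mem_univ j)
  set t := (P.part j).max' hne
  have ht : t ∈ P.part j := max'_mem _ _
  have hlower : IsLowerSet (((P.part j).erase t : Finset (Fin n)) : Set (Fin n)) := by
    intro x y hyx hx
    rw [mem_coe, mem_erase] at hx ⊢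
    have hxt : x < t := lt_of_le_of_ne (le_max' _ _ hx.2) hx.1
    obtain rfl | hyx := hyx.eq_or_lt
    · exact hx
    have hxt' : P.part x = P.part t := (SP.mem_part_iff.1 hx.2).trans (SP.mem_part_iff.1 ht).symm
    have hyx' : P.part y = P.part x := h.part_eq hyx hxt hxt'
    exact ⟨(hyx.trans hxt).ne, SP.mem_part_iff.2 (hyx'.trans (SP.mem_part_iff.1 hx.2))⟩
  obtain huniv | ⟨a, ha⟩ := hlower.eq_univ_or_Iio
  · exact absurd (huniv ▸ Set.mem_univ t : t ∈ ((P.part j).erase t : Set (Fin n))) (by simp)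
  refine ⟨a, t, not_lt.1 fun hta => ?_, ?_⟩
  · exact absurd (ha ▸ hta : t ∈ ((P.part j).erase t : Set (Fin n))) (by simp)
  · rw [← insert_erase ht, ← coe_inj.1 (ha.trans (coe_Iio a).symm), insert_erase ht]

lemma avoids1_23.eq_ofBlock_part {P : SP n} (h : avoids1_23 P) {z : Fin n} (hz : ∀ x, z ≤ x) :
    P = SP.ofBlock (P.part z) := by
  refine SP.ext_of_part_eq_iff fun i j => ?_
  rw [SP.part_ofBlock_eq_iff, SP.mem_part_iff, SP.mem_part_iff]
  refine ⟨fun hij => or_iff_not_imp_left.2 fun hne => ?_, ?_⟩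
  · obtain ⟨k, hk, hkmin⟩ : ∃ k, P.part k = P.part i ∧ blockMin P k ≠ k := by
      by_contra! hmin
      exact hne (eq_of_part_eq_of_mem_blockMins (mem_blockMins.2 (hmin i rfl))
        (mem_blockMins.2 (hmin j hij.symm)) hij)
    have hzk : P.part z = P.part i := by
      rw [← le_antisymm (h.blockMin_le hkmin z) (hz _), part_blockMin, hk]
    exact ⟨hzk.symm, hij.symm.trans hzk.symm⟩
  · rintro (rfl | ⟨hi, hj⟩)
    · rfl
    · exact hi.trans hj.symm

lemma avoids1_23.exists_eq_ofBlock_insert_Iio {P : SP n} (h : avoids1_23 P) (hn : 0 < n) :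
    ∃ a t : Fin n, a ≤ t ∧ P = SP.ofBlock (insert t (Iio a)) := by
  obtain ⟨a, t, hat, hpart⟩ := h.exists_part_eq_insert_Iio ⟨0, hn⟩
  exact ⟨a, t, hat, hpart ▸ h.eq_ofBlock_part fun x => Fin.le_def.2 (Nat.zero_le _)⟩

lemma SP.injOn_ofBlock_insert_Iio {a : Fin n} (ha : 0 < (a : ℕ)) :
    Set.InjOn (fun t => SP.ofBlock (insert t (Iio a))) (Ici a : Finset (Fin n)) := by
  intro t ht t' ht' htt'
  simp only [coe_Ici, Set.mem_Ici] at ht ht'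
  have hzero : (SP.ofBlock (insert t (Iio a))).part ⟨0, by omega⟩ =
      (SP.ofBlock (insert t (Iio a))).part t :=
    SP.part_ofBlock_eq_iff.2 (Or.inr ⟨mem_insert_of_mem (mem_Iio.2 ha), mem_insert_self _ _⟩)
  simp only at htt'
  rw [htt', SP.part_ofBlock_eq_iff] at hzero
  simp only [mem_insert, mem_Iio] at hzero
  grind

lemma SP.ofBlock_singleton (t : Fin n) : SP.ofBlock {t} = SP.ofBlock ∅ :=
  SP.ext_of_part_eq_iff fun i j => by
    simp only [SP.part_ofBlock_eq_iff, mem_singleton, notMem_empty, and_false, or_false]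
    exact or_iff_left_of_imp fun h => h.1.trans h.2.symm

open Classical in
lemma filter_avoids1_23_eq_image {k : ℕ} (hkn : k ≤ n) (hk : 1 ≤ k) :
    univ.filter (fun P : SP n => #P.parts = k ∧ avoids1_23 P) =
      (Ici ⟨n - k, by omega⟩).image
        fun t => SP.ofBlock (insert t (Iio ⟨n - k, by omega⟩)) := by
  ext P
  simp only [mem_filter, mem_univ, true_and, mem_image, mem_Ici]
  constructor
  · rintro ⟨hcard, hav⟩
    obtain ⟨a, t, hat, rfl⟩ := hav.exists_eq_ofBlock_insert_Iio (by omega)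
    rw [SP.card_parts_ofBlock_insert_Iio hat] at hcard
    have ha : a = ⟨n - k, by omega⟩ := Fin.ext (by simp only; omega)
    exact ⟨t, ha ▸ hat, by rw [ha]⟩
  · rintro ⟨t, hat, rfl⟩
    refine ⟨?_, SP.avoids1_23_ofBlock_insert_Iio _ _⟩
    rw [SP.card_parts_ofBlock_insert_Iio hat]
    simp only
    omega

open Classical in
theorem card_filter_avoids1_23 {k : ℕ} (hk : 1 ≤ k) (hkn : k ≤ n) :
    #(univ.filter (fun P : SP n => #P.parts = k ∧ avoids1_23 P)) = if k < n then k else 1 := by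
  rw [filter_avoids1_23_eq_image hkn hk]
  split_ifs with hlt
  · rw [card_image_of_injOn (SP.injOn_ofBlock_insert_Iio (by simp only; omega)), Fin.card_Ici]
    simp only
    omega
  · have hzero : ∀ t ∈ Ici (⟨n - k, by omega⟩ : Fin n),
        SP.ofBlock (insert t (Iio ⟨n - k, by omega⟩)) = SP.ofBlock ∅ := fun t _ => by
      rw [show (Iio ⟨n - k, by omega⟩ : Finset (Fin n)) = ∅ by
        ext x
        simp only [mem_Iio, notMem_empty, iff_false, not_lt, Fin.le_def]
        omega]
      exact SP.ofBlock_singleton t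
    rw [image_congr hzero, image_const ⟨_, mem_Ici.2 le_rfl⟩, card_singleton]

def SP.rev (P : SP n) : SP n := Finpartition.ofSetoid (Setoid.ker (P.part ∘ Fin.rev))

lemma SP.part_rev_eq_iff {P : SP n} {i j : Fin n} :
    P.rev.part i = P.rev.part j ↔ P.part i.rev = P.part j.rev :=
  Finpartition.part_ofSetoid_ker_eq_iff

lemma SP.rev_rev (P : SP n) : P.rev.rev = P :=
  SP.ext_of_part_eq_iff fun i j => by rw [SP.part_rev_eq_iff, SP.part_rev_eq_iff, Fin.rev_rev,
    Fin.rev_rev]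

lemma SP.card_parts_rev (P : SP n) : #P.rev.parts = #P.parts := by
  rw [SP.rev, Finpartition.card_parts_ofSetoid_ker, ← image_image,
    image_univ_of_surjective Fin.rev_surjective, P.parts_eq_image_part]

lemma avoids12_3_rev_iff {P : SP n} : avoids12_3 P.rev ↔ avoids1_23 P := by
  simp only [avoids12_3, avoids1_23, inSameBlock_iff_part_eq, SP.part_rev_eq_iff]
  refine not_congr ⟨fun ⟨a, b, c, hab, hbc, hsame, hdiff⟩ => ?_,
    fun ⟨a, b, c, hab, hbc, hsame, hdiff⟩ => ?_⟩
  · exact ⟨c.rev, b.rev, a.rev, Fin.rev_lt_rev.2 hbc, Fin.rev_lt_rev.2 hab, hsame.symm,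
      fun h => hdiff (hsame.trans h.symm)⟩
  · refine ⟨c.rev, b.rev, a.rev, Fin.rev_lt_rev.2 hbc, Fin.rev_lt_rev.2 hab, ?_, ?_⟩
    · rw [Fin.rev_rev, Fin.rev_rev]; exact hsame.symm
    · rw [Fin.rev_rev, Fin.rev_rev]; exact fun h => hdiff (h.symm.trans hsame.symm)

open Classical in
lemma card_filter_avoids12_3_eq_card_filter_avoids1_23 (k : ℕ) :
    #(univ.filter (fun P : SP n => #P.parts = k ∧ avoids12_3 P)) =
      #(univ.filter (fun P : SP n => #P.parts = k ∧ avoids1_23 P)) := by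
  refine card_bij' (fun P _ => P.rev) (fun P _ => P.rev) (fun P hP => ?_) (fun P hP => ?_)
    (fun P _ => SP.rev_rev P) (fun P _ => SP.rev_rev P)
  · simp only [mem_filter, mem_univ, true_and] at hP ⊢
    rw [SP.card_parts_rev, ← avoids12_3_rev_iff, SP.rev_rev]
    exact hP
  · simp only [mem_filter, mem_univ, true_and] at hP ⊢
    rw [SP.card_parts_rev, avoids12_3_rev_iff]
    exact hP

open Classical in
lemma genPoly_eq_card_mul_X_pow {k m : ℕ} {avoid : SP n → Prop}
    {stat : (Fin n → ℕ) → ℕ}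
    (hstat : ∀ P : SP n, #P.parts = k → avoid P → stat (rgf P) = m) :
    genPoly n k avoid stat =
      (#(univ.filter (fun P : SP n => #P.parts = k ∧ avoid P)) : ℕ[X]) * X ^ m := by
  have hterm : ∀ P ∈ univ.filter (fun P : SP n => #P.parts = k ∧ avoid P),
      (X : ℕ[X]) ^ stat (rgf P) = X ^ m := fun P hP => by
    obtain ⟨hcard, havoid⟩ := (mem_filter.1 hP).2
    rw [hstat P hcard havoid]
  rw [genPoly, Finset.sum_congr rfl hterm, sum_const, nsmul_eq_mul]

end SetPartitions

/-- For `n ≥ k ≥ 1`, `LS_{n,k}(1/23, r) = RB_{n,k}(12/3, r)`, both being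
`k · r^{C(k,2)}` when `n > k` and `r^{C(k,2)}` when `n = k`. -/
theorem stmt15 (n k : ℕ) (hk : 1 ≤ k) (hkn : k ≤ n) :
    genPoly n k avoids1_23 lsStat = genPoly n k avoids12_3 rbStat ∧
    (k < n → genPoly n k avoids1_23 lsStat =
      (k : Polynomial ℕ) * (X : Polynomial ℕ) ^ (k.choose 2)) ∧
    (k = n → genPoly n k avoids1_23 lsStat = (X : Polynomial ℕ) ^ (k.choose 2)) := by
  have hls := genPoly_eq_card_mul_X_pow (avoid := @avoids1_23 n) (k := k) (stat := lsStat)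
    fun P hP hav => by rw [lsStat_rgf_of_avoids1_23 hav, hP]
  have hrb := genPoly_eq_card_mul_X_pow (avoid := @avoids12_3 n) (k := k) (stat := rbStat)
    fun P hP hav => by rw [rbStat_rgf_of_avoids12_3 hav, hP]
  rw [card_filter_avoids12_3_eq_card_filter_avoids1_23, ← hls] at hrb
  rw [card_filter_avoids1_23 hk hkn] at hls
  refine ⟨hrb.symm, fun hlt => by rw [hls, if_pos hlt], fun heq => ?_⟩
  rw [hls, if_neg heq.not_lt, Nat.cast_one, one_mul]
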